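/- arXiv:math/0210465 — 2 statements merged into one kernel-verified Lean document; each statement's English description precedes it below -/
import Mathlib

section
/- The number of one-dimensional linear subspaces ℓ of F₃⁵ with q(ℓ) = −1 is exactly 36. -/
/-!
A line of `𝔽₃⁵` is a point of the projective space `ℙ(𝔽₃⁵)`, and the nonzero vectors of `𝔽₃⁵`
are in bijection with pairs (projective point, unit scalar). Since every unit `c` of `𝔽₃`
satisfies `c² = 1`, the condition `q = -1` is invariant under scaling, so the lines on which
`q = -1` are counted by the `72` vectors with `q(v) = -1`, each line carrying `|𝔽₃ˣ| = 2` of them.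
-/

open Projectivization Module
open scoped LinearAlgebra.Projectivization

section
variable {K V : Type*} [DivisionRing K] [AddCommGroup V] [Module K V]

theorem Projectivization.card_subtype_mk'_eq_card_mul_card_units (P : ℙ K V → Prop) :
    Nat.card {v : {v : V // v ≠ 0} // P (mk' K v)} = Nat.card {x // P x} * Nat.card Kˣ := by
  rw [← Nat.card_prod]
  exact Nat.card_congr <| ((nonZeroEquivProjectivizationProdUnits K V).subtypeEquiv
    fun _ ↦ Iff.rfl).trans Equiv.prodSubtypeFstEquivSubtypeProd

theorem forall_mem_span_singleton_ne_zero_iff {R : V → Prop}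
    (hR : ∀ (c : K) (v : V), c ≠ 0 → (R (c • v) ↔ R v)) {v : V} (hv : v ≠ 0) :
    (∀ w ∈ K ∙ v, w ≠ 0 → R w) ↔ R v := by
  refine ⟨fun h ↦ h v (Submodule.mem_span_singleton_self v) hv, fun hRv w hw hw0 ↦ ?_⟩
  obtain ⟨c, rfl⟩ := Submodule.mem_span_singleton.mp hw
  exact (hR c v (by rintro rfl; simp at hw0)).mpr hRv

theorem card_lines_forall_mul_card_units {R : V → Prop}
    (hR : ∀ (c : K) (v : V), c ≠ 0 → (R (c • v) ↔ R v)) :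
    Nat.card {ℓ : Submodule K V // finrank K ℓ = 1 ∧ ∀ v ∈ ℓ, v ≠ 0 → R v} * Nat.card Kˣ =
      Nat.card {v : V // v ≠ 0 ∧ R v} := by
  have lines : Nat.card {ℓ : Submodule K V // finrank K ℓ = 1 ∧ ∀ v ∈ ℓ, v ≠ 0 → R v} =
      Nat.card {x : ℙ K V // ∀ v ∈ x.submodule, v ≠ 0 → R v} :=
    Nat.card_congr <| (Equiv.subtypeSubtypeEquivSubtypeInter _ _).symm.trans
      ((equivSubmodule K V).subtypeEquiv fun _ ↦ Iff.rfl).symm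
  have vectors : Nat.card {v : V // v ≠ 0 ∧ R v} =
      Nat.card {v : {v : V // v ≠ 0} // ∀ w ∈ (mk' K v).submodule, w ≠ 0 → R w} := by
    refine Nat.card_congr <| (Equiv.subtypeSubtypeEquivSubtypeInter _ _).symm.trans
      (Equiv.subtypeEquivRight fun v ↦ ?_)
    rw [mk'_eq_mk, submodule_mk, forall_mem_span_singleton_ne_zero_iff hR v.2]
  rw [lines, vectors]
  exact (card_subtype_mk'_eq_card_mul_card_units fun x ↦ ∀ v ∈ x.submodule, v ≠ 0 → R v).symm

end

theorem ZMod.mul_self_eq_one_of_ne_zero_three : ∀ c : ZMod 3, c ≠ 0 → c * c = 1 := by decide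

theorem dotProduct_self_smul_eq_iff_zmod_three {ι : Type*} [Fintype ι] {c : ZMod 3} (hc : c ≠ 0)
    (v : ι → ZMod 3) (a : ZMod 3) : (c • v) ⬝ᵥ (c • v) = a ↔ v ⬝ᵥ v = a := by
  rw [smul_dotProduct, dotProduct_smul, smul_smul, ZMod.mul_self_eq_one_of_ne_zero_three c hc,
    one_smul]

theorem card_dotProduct_self_eq_neg_one_zmod_three :
    Nat.card {v : Fin 5 → ZMod 3 // v ≠ 0 ∧ v ⬝ᵥ v = -1} = 72 := by
  rw [Nat.card_eq_fintype_card]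
  decide

/-- The number of one-dimensional linear subspaces `ℓ` of `𝔽₃⁵` on which the standard
quadratic form `q(x) = ∑ xᵢ²` takes the value `-1` (on the nonzero vectors of `ℓ`)
is exactly `36`. -/
theorem num_q_eq_neg_one_lines_F3_5 :
    Nat.card {ℓ : Submodule (ZMod 3) (Fin 5 → ZMod 3) //
      Module.finrank (ZMod 3) ℓ = 1 ∧
      ∀ v : Fin 5 → ZMod 3, v ∈ ℓ → v ≠ 0 → (∑ i, v i * v i) = -1} = 36 := by
  have count := card_lines_forall_mul_card_units (K := ZMod 3) (V := Fin 5 → ZMod 3)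
    (R := fun v ↦ v ⬝ᵥ v = -1) fun c v hc ↦ dotProduct_self_smul_eq_iff_zmod_three hc v (-1)
  have units : Nat.card (ZMod 3)ˣ = 2 := by
    rw [Nat.card_eq_fintype_card, ZMod.card_units]
  rw [units, card_dotProduct_self_eq_neg_one_zmod_three] at count
  exact Nat.eq_of_mul_eq_mul_right two_pos count
end

section
/- Let z be a line in F₃⁵ with q(z) = −1. Then the number of lines w with q(w) = −1 and w ⊆ z^⊥ is exactly 15; all such w are distinct from z, since z ⊄ z^⊥. (Geometrically: each boundary divisor meets exactly 15 other boundary divisors.) -/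
/-!
Every line `w` with `q(w) = -1` in `z^⊥` is spanned by a vector `v` with `q(v) = -1` and
`b(v, v₀) = 0`, where `z = ⟨v₀⟩`, and each such line contains exactly `|𝔽₃ˣ| = 2` of these
vectors. So the count is half the number of vectors of norm `-1` in the quadratic space `v₀^⊥`,
which is nondegenerate of dimension 4 and discriminant `-1`, hence of minus type with
`3³ + 3 = 30` such vectors. Finally `z ⊄ z^⊥` because `q(v₀) = -1 ≠ 0`.
-/

open Module Submodule

section Lines

variable {K V : Type*} [Field K] [AddCommGroup V] [Module K V]

variable (K) in
def linesWith (P : V → Prop) : Set (Submodule K V) :=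
  {w | finrank K w = 1 ∧ ∀ v ∈ w, v ≠ 0 → P v}

lemma mem_linesWith_and_iff {P Q : V → Prop} (hQ0 : Q 0) (w : Submodule K V) :
    (finrank K w = 1 ∧ (∀ v ∈ w, v ≠ 0 → P v) ∧ ∀ v ∈ w, Q v) ↔
      w ∈ linesWith K (fun v => P v ∧ Q v) := by
  refine and_congr_right fun _ => ⟨fun ⟨hP, hQ⟩ v hv hv0 => ⟨hP v hv hv0, hQ v hv⟩,
    fun h => ⟨fun v hv hv0 => (h v hv hv0).1, fun v hv => ?_⟩⟩
  rcases eq_or_ne v 0 with rfl | hv0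
  · exact hQ0
  · exact (h v hv hv0).2

lemma span_singleton_mem_linesWith {P : V → Prop} (hP : ∀ (c : K) v, c ≠ 0 → P v → P (c • v))
    {v : V} (hv : P v) (hv0 : v ≠ 0) : K ∙ v ∈ linesWith K P := by
  refine ⟨finrank_span_singleton hv0, fun u hu hu0 => ?_⟩
  obtain ⟨c, rfl⟩ := mem_span_singleton.mp hu
  exact hP c v (by rintro rfl; simp at hu0) hv

lemma card_nonzero_mem_of_finrank_eq_one {w : Submodule K V} (hw : finrank K w = 1) :
    Nat.card {v : V // v ∈ w ∧ v ≠ 0} = Nat.card K - 1 := by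
  have : FiniteDimensional K w := Module.finite_of_finrank_pos (by omega)
  let e : w ≃ₗ[K] K := LinearEquiv.ofFinrankEq w K (by simp [hw])
  rw [← Nat.card_units]
  refine Nat.card_congr ((Equiv.subtypeSubtypeEquivSubtypeInter (· ∈ w) (· ≠ 0)).symm.trans ?_)
  exact (e.toEquiv.subtypeEquiv fun x => by simp).trans unitsEquivNeZero.symm

noncomputable def equivSigmaLinesWith {P : V → Prop} (hP0 : ¬ P 0)
    (hP : ∀ (c : K) v, c ≠ 0 → P v → P (c • v)) :
    {v // P v} ≃ Σ w : linesWith K P, {v : V // v ∈ w.1 ∧ v ≠ 0} where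
  toFun v :=
    have hv0 : v.1 ≠ 0 := fun h => hP0 (h ▸ v.2)
    ⟨⟨K ∙ v.1, span_singleton_mem_linesWith hP v.2 hv0⟩, v.1, mem_span_singleton_self _, hv0⟩
  invFun x := ⟨x.2.1, x.1.2.2 _ x.2.2.1 x.2.2.2⟩
  left_inv _ := rfl
  right_inv x := Sigma.subtype_ext
    (Subtype.ext (eq_span_singleton_of_mem_of_finrank_eq_one x.1.2.1 x.2.2.1 x.2.2.2).symm) rfl

theorem card_linesWith_mul [Finite V] {P : V → Prop} (hP0 : ¬ P 0)
    (hP : ∀ (c : K) v, c ≠ 0 → P v → P (c • v)) :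
    Nat.card (linesWith K P) * (Nat.card K - 1) = Nat.card {v // P v} := by
  have := Fintype.ofFinite (linesWith K P)
  rw [Nat.card_congr (equivSigmaLinesWith hP0 hP), Nat.card_sigma,
    Finset.sum_congr rfl fun w _ => card_nonzero_mem_of_finrank_eq_one w.2.1,
    Finset.sum_const, smul_eq_mul, Finset.card_univ, Nat.card_eq_fintype_card]

end Lines

lemma forall_mem_span_singleton_dotProduct_eq_zero_iff {R n : Type*} [CommSemiring R]
    [Fintype n] {v v₀ : n → R} : (∀ u ∈ R ∙ v₀, v ⬝ᵥ u = 0) ↔ v ⬝ᵥ v₀ = 0 := by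
  refine ⟨fun h => h v₀ (mem_span_singleton_self v₀), fun h u hu => ?_⟩
  obtain ⟨c, rfl⟩ := mem_span_singleton.mp hu
  rw [dotProduct_smul, h, smul_zero]

namespace ZMod3

lemma smul_dotProduct_smul_self {n : Type*} [Fintype n] {c : ZMod 3} (hc : c ≠ 0)
    (v : n → ZMod 3) : (c • v) ⬝ᵥ (c • v) = v ⬝ᵥ v := by
  have hcc : c * c = 1 := by revert c; decide
  rw [smul_dotProduct, dotProduct_smul, smul_smul, smul_eq_mul, hcc, one_mul]

set_option maxRecDepth 10000 in
lemma card_dotProduct_self_eq_neg_one_of_orthogonal (v₀ : Fin 5 → ZMod 3)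
    (hv₀ : v₀ ⬝ᵥ v₀ = -1) :
    Nat.card {v : Fin 5 → ZMod 3 // v ⬝ᵥ v = -1 ∧ v ⬝ᵥ v₀ = 0} = 30 := by
  revert v₀
  simp only [Nat.card_eq_fintype_card, Fintype.card_subtype]
  decide

end ZMod3

open ZMod3 in
/-- If `z` is a line in `𝔽₃⁵` with `q(z) = −1` (for `q(x) = ∑ xᵢ²`), then there are
exactly `15` lines `w` with `q(w) = −1` contained in `z^⊥`; all such `w` are distinct
from `z`, since `z` is not contained in `z^⊥`. -/
theorem fifteen_minus_one_lines_perp_to_minus_one_line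
    (z : Submodule (ZMod 3) (Fin 5 → ZMod 3))
    (hz : Module.finrank (ZMod 3) z = 1)
    (hqz : ∀ v : Fin 5 → ZMod 3, v ∈ z → v ≠ 0 → (∑ i, v i * v i) = -1) :
    Nat.card {w : Submodule (ZMod 3) (Fin 5 → ZMod 3) //
      Module.finrank (ZMod 3) w = 1 ∧
      (∀ v : Fin 5 → ZMod 3, v ∈ w → v ≠ 0 → (∑ i, v i * v i) = -1) ∧
      ∀ v : Fin 5 → ZMod 3, v ∈ w → ∀ u : Fin 5 → ZMod 3, u ∈ z →
        (∑ i, v i * u i) = 0} = 15 ∧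
    (¬ ∀ v : Fin 5 → ZMod 3, v ∈ z → ∀ u : Fin 5 → ZMod 3, u ∈ z →
        (∑ i, v i * u i) = 0) ∧
    ∀ w : Submodule (ZMod 3) (Fin 5 → ZMod 3),
      Module.finrank (ZMod 3) w = 1 →
      (∀ v : Fin 5 → ZMod 3, v ∈ w → v ≠ 0 → (∑ i, v i * v i) = -1) →
      (∀ v : Fin 5 → ZMod 3, v ∈ w → ∀ u : Fin 5 → ZMod 3, u ∈ z →
        (∑ i, v i * u i) = 0) →
      w ≠ z := by
  obtain ⟨⟨v₀, hv₀z⟩, hv₀, -⟩ := finrank_eq_one_iff'.mp hz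
  have hv₀0 : v₀ ≠ 0 := by simpa using hv₀
  have hq : v₀ ⬝ᵥ v₀ = -1 := hqz v₀ hv₀z hv₀0
  have hnot : ¬ ∀ v ∈ z, ∀ u ∈ z, v ⬝ᵥ u = 0 := fun h =>
    absurd (hq ▸ h v₀ hv₀z v₀ hv₀z) (by decide)
  refine ⟨?_, hnot, fun w _ _ hw hwz => hnot (hwz ▸ hw)⟩
  let P (v : Fin 5 → ZMod 3) : Prop := v ⬝ᵥ v = -1 ∧ v ⬝ᵥ v₀ = 0
  have hP (c : ZMod 3) (v) (hc : c ≠ 0) (hv : P v) : P (c • v) := by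
    simp only [P, smul_dotProduct_smul_self hc, smul_dotProduct, hv.1, hv.2, smul_zero, true_and]
  have hcard := card_linesWith_mul (by simp [P]) hP
  rw [card_dotProduct_self_eq_neg_one_of_orthogonal v₀ hq, Nat.card_zmod] at hcard
  rw [eq_span_singleton_of_mem_of_finrank_eq_one hz hv₀z hv₀0]
  calc _ = Nat.card (linesWith (ZMod 3) P) := Nat.card_congr <| Equiv.subtypeEquivRight fun w => by
        show _ ∧ _ ∧ (∀ v ∈ w, ∀ u ∈ _, v ⬝ᵥ u = 0) ↔ _
        simp only [forall_mem_span_singleton_dotProduct_eq_zero_iff]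
        exact mem_linesWith_and_iff (Q := (· ⬝ᵥ v₀ = 0)) (zero_dotProduct v₀) w
    _ = 15 := by omega
end
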